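/- Let A = V Λ V⁻¹ ∈ ℂ^{n×n}, where V is invertible, Λ is diagonal, and ‖Λ‖₂ ≤ 1. Then the Hausdorff distance between the convex hull of the eigenvalues of A and the numerical range W(A) satisfies d_H( conv(Λ(A)), W(A) ) ≤ ‖V‖₂ · ‖(V*V)^{−1/2} − I‖₂ + ‖(V*V)^{1/2} − I‖₂, where (V*V)^{1/2} denotes the unique Hermitian positive semidefinite square root of the Hermitian positive definite matrix V*V and (V*V)^{−1/2} is its inverse. -/

import Mathlib

open Matrix
open scoped ComplexOrder

/-- The linear action of a matrix on Euclidean space. -/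
noncomputable def mvE {m n : ℕ} (M : Matrix (Fin m) (Fin n) ℂ)
    (x : EuclideanSpace ℂ (Fin n)) : EuclideanSpace ℂ (Fin m) :=
  Matrix.toEuclideanLin M x

/-- The numerical range `W(A) = {⟨x, Ax⟩/⟨x, x⟩ : x ≠ 0}` of a matrix `A`. -/
noncomputable def numRange {n : ℕ} (A : Matrix (Fin n) (Fin n) ℂ) : Set ℂ :=
  {z | ∃ x : EuclideanSpace ℂ (Fin n), x ≠ 0 ∧ z = (inner ℂ x (mvE A x) : ℂ) / (inner ℂ x x : ℂ)}

/-- The positive semidefinite square root of a positive semidefinite matrix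
(the definition removed from Mathlib, restated with its old meaning). -/
noncomputable def Matrix.PosSemidef.sqrt {𝕜 : Type*} [RCLike 𝕜] {n : Type*} [Fintype n]
    [DecidableEq n] {A : Matrix n n 𝕜} (hA : A.PosSemidef) : Matrix n n 𝕜 :=
  hA.1.eigenvectorUnitary.1 * diagonal ((↑) ∘ (√·) ∘ hA.1.eigenvalues) *
  (star hA.1.eigenvectorUnitary : Matrix n n 𝕜)

/-- The spectral (ℓ² operator) norm of a complex matrix. -/
noncomputable def specNorm {m n : ℕ} (M : Matrix (Fin m) (Fin n) ℂ) : ℝ :=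
  ‖LinearMap.toContinuousLinearMap (Matrix.toEuclideanLin M)‖

/-!
Polar decomposition: `V = U S` with `S = (V*V)^{1/2}` and `U = V S⁻¹` unitary. The normal matrix
`N = U Λ U*` has `W(N) = W(Λ) = conv(Λ(A))`, and `W` is `1`-Lipschitz from the operator norm to
the Hausdorff distance. Finally `A - N = U (S Λ S⁻¹ - Λ) U*`, where
`S Λ S⁻¹ - Λ = S Λ (S⁻¹ - I) + (S - I) Λ`, `‖S‖₂ = ‖V‖₂` and `‖Λ‖₂ ≤ 1`.
-/

open scoped Matrix.Norms.L2Operator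

lemma norm_mul_mul_sub_le_of_norm_le_one {R : Type*} [NormedRing R] (s t : R) {a : R}
    (ha : ‖a‖ ≤ 1) : ‖s * a * t - a‖ ≤ ‖s‖ * ‖t - 1‖ + ‖s - 1‖ :=
  calc ‖s * a * t - a‖ = ‖s * a * (t - 1) + (s - 1) * a‖ := by noncomm_ring
    _ ≤ ‖s‖ * ‖a‖ * ‖t - 1‖ + ‖s - 1‖ * ‖a‖ :=
      (norm_add_le _ _).trans (add_le_add (norm_mul₃_le ..) (norm_mul_le ..))
    _ ≤ ‖s‖ * 1 * ‖t - 1‖ + ‖s - 1‖ * 1 := by gcongr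
    _ = ‖s‖ * ‖t - 1‖ + ‖s - 1‖ := by ring

lemma convexHull_range_eq_image_stdSimplex {R ι E : Type*} [Field R] [LinearOrder R]
    [IsStrictOrderedRing R] [Fintype ι] [AddCommGroup E] [Module R E] (v : ι → E) :
    convexHull R (Set.range v) = (fun w : ι → R ↦ ∑ i, w i • v i) '' stdSimplex R ι := by
  classical
  have hv : (fun w : ι → R ↦ ∑ i, w i • v i) = Fintype.linearCombination R v := by
    funext w
    rw [Fintype.linearCombination_apply]
  rw [← convexHull_rangle_single_eq_stdSimplex, hv, LinearMap.image_convexHull, ← Set.range_comp]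
  congr 2
  funext i
  simp [Fintype.linearCombination_apply_single]

lemma specNorm_eq_l2_opNorm {m n : ℕ} (M : Matrix (Fin m) (Fin n) ℂ) : specNorm M = ‖M‖ :=
  rfl

namespace Matrix.PosSemidef

variable {𝕜 : Type*} [RCLike 𝕜] {n : Type*} [Fintype n] [DecidableEq n] {A : Matrix n n 𝕜}

lemma sqrt_mul_sqrt (hA : A.PosSemidef) : hA.sqrt * hA.sqrt = A := by
  have hsqrt : hA.sqrt = Unitary.conjStarAlgAut 𝕜 _ hA.1.eigenvectorUnitary
      (diagonal ((↑) ∘ (√·) ∘ hA.1.eigenvalues)) := rfl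
  conv_rhs => rw [hA.1.spectral_theorem]
  rw [hsqrt, ← map_mul, diagonal_mul_diagonal]
  congr 2
  funext i
  simp [← RCLike.ofReal_mul, Real.mul_self_sqrt (hA.eigenvalues_nonneg i)]

lemma conjTranspose_sqrt (hA : A.PosSemidef) : hA.sqrtᴴ = hA.sqrt := by
  simp only [sqrt, conjTranspose_mul, diagonal_conjTranspose, mul_assoc, star_eq_conjTranspose,
    conjTranspose_conjTranspose]
  congr 3
  funext i
  simp

end Matrix.PosSemidef

namespace Matrix

variable {R : Type*} [CommRing R] {n : Type*} [Fintype n] [DecidableEq n]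

lemma spectrum_conj_nonsing_inv {V : Matrix n n R} (hV : IsUnit V.det) (M : Matrix n n R) :
    spectrum R (V * M * V⁻¹) = spectrum R M := by
  lift V to (Matrix n n R)ˣ using (isUnit_iff_isUnit_det V).mpr hV
  rw [← coe_units_inv, spectrum.units_conjugate]

variable [StarRing R]

lemma isUnit_det_of_mul_self_eq_conjTranspose_mul_self {S V : Matrix n n R}
    (hSV : S * S = Vᴴ * V) (hV : IsUnit V.det) : IsUnit S.det := by
  have h : IsUnit (S.det * S.det) := by
    rw [← det_mul, hSV, det_mul, det_conjTranspose]
    exact hV.star.mul hV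
  exact isUnit_of_mul_isUnit_left h

lemma mul_nonsing_inv_mem_unitary {S V : Matrix n n R} (hS : Sᴴ = S) (hSV : S * S = Vᴴ * V)
    (hSdet : IsUnit S.det) : V * S⁻¹ ∈ unitary (Matrix n n R) := by
  rw [← unitaryGroup, mem_unitaryGroup_iff', star_eq_conjTranspose, conjTranspose_mul,
    conjTranspose_nonsing_inv, hS]
  calc S⁻¹ * Vᴴ * (V * S⁻¹) = S⁻¹ * (S * S) * S⁻¹ := by simp only [hSV, mul_assoc]
    _ = 1 := by rw [← mul_assoc, nonsing_inv_mul _ hSdet, one_mul, mul_nonsing_inv _ hSdet]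

end Matrix

section NumericalRange

variable {n : ℕ}

lemma mvE_eq_toEuclideanCLM (M : Matrix (Fin n) (Fin n) ℂ) (x : EuclideanSpace ℂ (Fin n)) :
    mvE M x = toEuclideanCLM (n := Fin n) (𝕜 := ℂ) M x :=
  rfl

lemma inner_mvE_diagonal (d : Fin n → ℂ) (y : EuclideanSpace ℂ (Fin n)) :
    (inner ℂ y (mvE (diagonal d) y) : ℂ) = ∑ i, (‖y i‖ ^ 2 : ℝ) • d i := by
  simp only [PiLp.inner_apply, RCLike.inner_apply, mvE_eq_toEuclideanCLM, ofLp_toEuclideanCLM,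
    mulVec_diagonal]
  refine Fintype.sum_congr _ _ fun i ↦ ?_
  rw [Complex.real_smul, Complex.ofReal_pow, ← Complex.mul_conj']
  ring

lemma inner_div_inner_diagonal (d : Fin n → ℂ) (y : EuclideanSpace ℂ (Fin n)) :
    (inner ℂ y (mvE (diagonal d) y) : ℂ) / (inner ℂ y y : ℂ) =
      Finset.univ.centerMass (fun i ↦ ‖y i‖ ^ 2) d := by
  rw [inner_mvE_diagonal, inner_self_eq_norm_sq_to_K, ← RCLike.ofReal_pow,
    EuclideanSpace.norm_sq_eq, Finset.centerMass, div_eq_inv_mul, ← RCLike.ofReal_inv,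
    RCLike.real_smul_eq_coe_mul]

lemma numRange_diagonal (d : Fin n → ℂ) :
    numRange (diagonal d) = convexHull ℝ (Set.range d) := by
  ext z
  constructor
  · rintro ⟨y, hy, rfl⟩
    rw [inner_div_inner_diagonal]
    refine Finset.univ.centerMass_mem_convexHull (fun i _ ↦ sq_nonneg _) ?_
      fun i _ ↦ Set.mem_range_self i
    rw [← EuclideanSpace.norm_sq_eq]
    exact pow_pos (norm_pos_iff.2 hy) 2
  · rw [convexHull_range_eq_image_stdSimplex]
    rintro ⟨w, ⟨hw₀, hw₁⟩, rfl⟩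
    set y : EuclideanSpace ℂ (Fin n) := WithLp.toLp 2 fun i ↦ (√(w i) : ℂ)
    have hyw : (fun i ↦ ‖y i‖ ^ 2) = w := by
      funext i
      simp [y, Real.sq_sqrt (hw₀ i)]
    have hy : y ≠ 0 := by
      rintro h
      simp [← hyw, h] at hw₁
    refine ⟨y, hy, ?_⟩
    rw [inner_div_inner_diagonal, hyw, Finset.centerMass_eq_of_sum_1 _ _ hw₁]

lemma numRange_unitary_conj_subset {U : Matrix (Fin n) (Fin n) ℂ}
    (hU : U ∈ unitary (Matrix (Fin n) (Fin n) ℂ)) (D : Matrix (Fin n) (Fin n) ℂ) :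
    numRange (U * D * star U) ⊆ numRange D := by
  rintro _ ⟨x, hx, rfl⟩
  set u := toEuclideanCLM (n := Fin n) (𝕜 := ℂ) (star U)
  have hu : u ∈ unitary _ := Unitary.map_mem _ (Unitary.star_mem hU)
  refine ⟨u x, ?_, ?_⟩
  · rwa [ne_eq, ← norm_eq_zero, u.norm_map_of_mem_unitary hu, norm_eq_zero]
  · rw [u.inner_map_map_of_mem_unitary hu, mvE_eq_toEuclideanCLM, mvE_eq_toEuclideanCLM,
      map_mul, map_mul, mul_apply_eq_comp, mul_apply_eq_comp,
      ← ContinuousLinearMap.adjoint_inner_left, ← ContinuousLinearMap.star_eq_adjoint, ← map_star]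

lemma numRange_unitary_conj {U : Matrix (Fin n) (Fin n) ℂ}
    (hU : U ∈ unitary (Matrix (Fin n) (Fin n) ℂ)) (D : Matrix (Fin n) (Fin n) ℂ) :
    numRange (U * D * star U) = numRange D := by
  refine (numRange_unitary_conj_subset hU D).antisymm ?_
  have hD : star U * (U * D * star U) * star (star U) = D := by
    simp only [star_star, ← mul_assoc, Unitary.star_mul_self_of_mem hU, one_mul]
    rw [mul_assoc, Unitary.star_mul_self_of_mem hU, mul_one]
  simpa only [hD] using numRange_unitary_conj_subset (Unitary.star_mem hU) (U * D * star U)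

lemma exists_dist_le_of_mem_numRange (A B : Matrix (Fin n) (Fin n) ℂ) {z : ℂ}
    (hz : z ∈ numRange A) : ∃ w ∈ numRange B, dist z w ≤ ‖A - B‖ := by
  obtain ⟨x, hx, rfl⟩ := hz
  refine ⟨_, ⟨x, hx, rfl⟩, ?_⟩
  have hx' : 0 < ‖x‖ := norm_pos_iff.2 hx
  rw [dist_eq_norm, ← sub_div, ← inner_sub_right, inner_self_eq_norm_sq_to_K, norm_div, norm_pow,
    RCLike.norm_ofReal, abs_norm, div_le_iff₀ (by positivity)]
  calc ‖(inner ℂ x (mvE A x - mvE B x) : ℂ)‖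
        ≤ ‖x‖ * ‖toEuclideanCLM (n := Fin n) (𝕜 := ℂ) (A - B) x‖ := by
          rw [map_sub]
          exact norm_inner_le_norm _ _
    _ ≤ ‖x‖ * (‖A - B‖ * ‖x‖) := by gcongr; exact ContinuousLinearMap.le_opNorm _ _
    _ = ‖A - B‖ * ‖x‖ ^ 2 := by ring

lemma hausdorffDist_numRange_le (A B : Matrix (Fin n) (Fin n) ℂ) :
    Metric.hausdorffDist (numRange A) (numRange B) ≤ ‖A - B‖ :=
  Metric.hausdorffDist_le_of_mem_dist (norm_nonneg _)
    (fun _ hz ↦ exists_dist_le_of_mem_numRange A B hz)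
    fun _ hz ↦ by simpa only [norm_sub_rev] using exists_dist_le_of_mem_numRange B A hz

end NumericalRange

/-- Let `A = VΛV⁻¹` with `V` invertible, `Λ` diagonal and `‖Λ‖₂ ≤ 1`. Then
`d_H(conv(Λ(A)), W(A)) ≤ ‖V‖₂·‖(V*V)^{−1/2} − I‖₂ + ‖(V*V)^{1/2} − I‖₂`, where `(V*V)^{1/2}`
is the positive semidefinite square root of `V*V`. -/
theorem eigenhull_numrange_bound (n : ℕ) (V : Matrix (Fin n) (Fin n) ℂ) (hV : IsUnit V.det)
    (d : Fin n → ℂ) (hΛ : specNorm (Matrix.diagonal d) ≤ 1)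
    (A : Matrix (Fin n) (Fin n) ℂ) (hA : A = V * Matrix.diagonal d * V⁻¹) :
    Metric.hausdorffDist (convexHull ℝ (spectrum ℂ A)) (numRange A) ≤
      specNorm V * specNorm ((Matrix.posSemidef_conjTranspose_mul_self V).sqrt⁻¹ - 1) +
        specNorm ((Matrix.posSemidef_conjTranspose_mul_self V).sqrt - 1) := by
  rw [specNorm_eq_l2_opNorm] at hΛ
  simp only [specNorm_eq_l2_opNorm]
  set S := (posSemidef_conjTranspose_mul_self V).sqrt
  have hSS : S * S = Vᴴ * V := PosSemidef.sqrt_mul_sqrt _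
  have hSdet : IsUnit S.det := isUnit_det_of_mul_self_eq_conjTranspose_mul_self hSS hV
  set U := V * S⁻¹
  have hU : U ∈ unitary _ :=
    mul_nonsing_inv_mem_unitary (PosSemidef.conjTranspose_sqrt _) hSS hSdet
  have hVUS : V = U * S := (nonsing_inv_mul_cancel_right _ _ hSdet).symm
  have hAU : A = U * (S * diagonal d * S⁻¹) * star U := by
    rw [hA, hVUS, Matrix.mul_inv_rev, inv_eq_left_inv (Unitary.star_mul_self_of_mem hU)]
    simp only [mul_assoc]
  have hhull : convexHull ℝ (spectrum ℂ A) = numRange (U * diagonal d * star U) := by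
    rw [hA, spectrum_conj_nonsing_inv hV, spectrum_diagonal, numRange_unitary_conj hU,
      numRange_diagonal]
  have hSV : ‖V‖ = ‖S‖ := by
    conv_lhs => rw [hVUS]
    exact CStarRing.norm_mem_unitary_mul _ hU
  calc _ = Metric.hausdorffDist (numRange (U * diagonal d * star U)) (numRange A) := by rw [hhull]
    _ ≤ ‖U * diagonal d * star U - A‖ := hausdorffDist_numRange_le _ _
    _ = ‖S * diagonal d * S⁻¹ - diagonal d‖ := by
      rw [hAU, ← sub_mul, ← mul_sub, CStarRing.norm_mul_mem_unitary _ (Unitary.star_mem hU),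
        CStarRing.norm_mem_unitary_mul _ hU, norm_sub_rev]
    _ ≤ ‖V‖ * ‖S⁻¹ - 1‖ + ‖S - 1‖ := hSV ▸ norm_mul_mul_sub_le_of_norm_le_one _ _ hΛ
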